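/- arXiv:2601.14237 — 6 statements merged into one kernel-verified Lean document; each statement's English description precedes it below -/
import Mathlib

section
/- Let C be a category equipped with a monoidal sum structure (⊕, 0, α_⊕, λ_⊕, ρ_⊕) and a monoidal product structure (⊗, 1, α_⊗, λ_⊗, ρ_⊗). If there exists a natural transformation i : ⊕ → ⊗ (i.e., a family of morphisms i_{A,B} : A ⊕ B → A ⊗ B natural in A and B), then C is pointed: there exists a morphism from the terminal object 1 to the initial object 0, so that 0 ≅ 1 is a zero object. Explicitly, the composite λ_⊗ ∘ i_{1,0} ∘ ρ_⊕⁻¹ : 1 → 0 is such a morphism. -/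
open CategoryTheory CategoryTheory.Limits

universe v u

/-- A monoidal sum structure on a category `C`: a monoidal structure `(⊕, 0, α, λ, ρ)`
whose unit `0` is an initial object and whose standard inclusions
`ι₁ = (1_X ⊕ !) ∘ ρ⁻¹` and `ι₂ = (! ⊕ 1_Y) ∘ λ⁻¹` are jointly epimorphic. -/
structure SumStruct (C : Type u) [Category.{v} C] where
  obj : C → C → C
  map : ∀ {X₁ X₂ Y₁ Y₂ : C}, (X₁ ⟶ Y₁) → (X₂ ⟶ Y₂) → (obj X₁ X₂ ⟶ obj Y₁ Y₂)
  map_id : ∀ X Y : C, map (𝟙 X) (𝟙 Y) = 𝟙 (obj X Y)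
  map_comp : ∀ {X₁ X₂ Y₁ Y₂ Z₁ Z₂ : C} (f₁ : X₁ ⟶ Y₁) (f₂ : X₂ ⟶ Y₂)
      (g₁ : Y₁ ⟶ Z₁) (g₂ : Y₂ ⟶ Z₂),
    map (f₁ ≫ g₁) (f₂ ≫ g₂) = map f₁ f₂ ≫ map g₁ g₂
  unit : C
  associator : ∀ X Y Z : C, obj (obj X Y) Z ≅ obj X (obj Y Z)
  associator_naturality : ∀ {X₁ X₂ X₃ Y₁ Y₂ Y₃ : C} (f₁ : X₁ ⟶ Y₁) (f₂ : X₂ ⟶ Y₂) (f₃ : X₃ ⟶ Y₃),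
    map (map f₁ f₂) f₃ ≫ (associator Y₁ Y₂ Y₃).hom
      = (associator X₁ X₂ X₃).hom ≫ map f₁ (map f₂ f₃)
  leftUnitor : ∀ X : C, obj unit X ≅ X
  leftUnitor_naturality : ∀ {X Y : C} (f : X ⟶ Y),
    map (𝟙 unit) f ≫ (leftUnitor Y).hom = (leftUnitor X).hom ≫ f
  rightUnitor : ∀ X : C, obj X unit ≅ X
  rightUnitor_naturality : ∀ {X Y : C} (f : X ⟶ Y),
    map f (𝟙 unit) ≫ (rightUnitor Y).hom = (rightUnitor X).hom ≫ f
  pentagon : ∀ W X Y Z : C,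
    map (associator W X Y).hom (𝟙 Z) ≫ (associator W (obj X Y) Z).hom
        ≫ map (𝟙 W) (associator X Y Z).hom
      = (associator (obj W X) Y Z).hom ≫ (associator W X (obj Y Z)).hom
  triangle : ∀ X Y : C,
    (associator X unit Y).hom ≫ map (𝟙 X) (leftUnitor Y).hom = map (rightUnitor X).hom (𝟙 Y)
  isInitialUnit : IsInitial unit
  jointlyEpi : ∀ {X Y Z : C} (f g : obj X Y ⟶ Z),
    ((rightUnitor X).inv ≫ map (𝟙 X) (isInitialUnit.to Y)) ≫ f
      = ((rightUnitor X).inv ≫ map (𝟙 X) (isInitialUnit.to Y)) ≫ g →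
    ((leftUnitor Y).inv ≫ map (isInitialUnit.to X) (𝟙 Y)) ≫ f
      = ((leftUnitor Y).inv ≫ map (isInitialUnit.to X) (𝟙 Y)) ≫ g →
    f = g

namespace SumStruct

variable {C : Type u} [Category.{v} C]

/-- The first standard inclusion `ι₁ : X ⟶ X ⊕ Y`. -/
def i1 (S : SumStruct C) (X Y : C) : X ⟶ S.obj X Y :=
  (S.rightUnitor X).inv ≫ S.map (𝟙 X) (S.isInitialUnit.to Y)

/-- The second standard inclusion `ι₂ : Y ⟶ X ⊕ Y`. -/
def i2 (S : SumStruct C) (X Y : C) : Y ⟶ S.obj X Y :=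
  (S.leftUnitor Y).inv ≫ S.map (S.isInitialUnit.to X) (𝟙 Y)

end SumStruct

/-- A monoidal product structure on a category `C`: a monoidal structure `(⊗, 1, α, λ, ρ)`
whose unit `1` is a terminal object and whose standard projections
`π₁ = ρ ∘ (1_X ⊗ !)` and `π₂ = λ ∘ (! ⊗ 1_Y)` are jointly monomorphic. -/
structure ProdStruct (C : Type u) [Category.{v} C] where
  obj : C → C → C
  map : ∀ {X₁ X₂ Y₁ Y₂ : C}, (X₁ ⟶ Y₁) → (X₂ ⟶ Y₂) → (obj X₁ X₂ ⟶ obj Y₁ Y₂)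
  map_id : ∀ X Y : C, map (𝟙 X) (𝟙 Y) = 𝟙 (obj X Y)
  map_comp : ∀ {X₁ X₂ Y₁ Y₂ Z₁ Z₂ : C} (f₁ : X₁ ⟶ Y₁) (f₂ : X₂ ⟶ Y₂)
      (g₁ : Y₁ ⟶ Z₁) (g₂ : Y₂ ⟶ Z₂),
    map (f₁ ≫ g₁) (f₂ ≫ g₂) = map f₁ f₂ ≫ map g₁ g₂
  unit : C
  associator : ∀ X Y Z : C, obj (obj X Y) Z ≅ obj X (obj Y Z)
  associator_naturality : ∀ {X₁ X₂ X₃ Y₁ Y₂ Y₃ : C} (f₁ : X₁ ⟶ Y₁) (f₂ : X₂ ⟶ Y₂) (f₃ : X₃ ⟶ Y₃),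
    map (map f₁ f₂) f₃ ≫ (associator Y₁ Y₂ Y₃).hom
      = (associator X₁ X₂ X₃).hom ≫ map f₁ (map f₂ f₃)
  leftUnitor : ∀ X : C, obj unit X ≅ X
  leftUnitor_naturality : ∀ {X Y : C} (f : X ⟶ Y),
    map (𝟙 unit) f ≫ (leftUnitor Y).hom = (leftUnitor X).hom ≫ f
  rightUnitor : ∀ X : C, obj X unit ≅ X
  rightUnitor_naturality : ∀ {X Y : C} (f : X ⟶ Y),
    map f (𝟙 unit) ≫ (rightUnitor Y).hom = (rightUnitor X).hom ≫ f
  pentagon : ∀ W X Y Z : C,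
    map (associator W X Y).hom (𝟙 Z) ≫ (associator W (obj X Y) Z).hom
        ≫ map (𝟙 W) (associator X Y Z).hom
      = (associator (obj W X) Y Z).hom ≫ (associator W X (obj Y Z)).hom
  triangle : ∀ X Y : C,
    (associator X unit Y).hom ≫ map (𝟙 X) (leftUnitor Y).hom = map (rightUnitor X).hom (𝟙 Y)
  isTerminalUnit : IsTerminal unit
  jointlyMono : ∀ {X Y Z : C} (f g : Z ⟶ obj X Y),
    f ≫ (map (𝟙 X) (isTerminalUnit.from Y) ≫ (rightUnitor X).hom)
      = g ≫ (map (𝟙 X) (isTerminalUnit.from Y) ≫ (rightUnitor X).hom) →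
    f ≫ (map (isTerminalUnit.from X) (𝟙 Y) ≫ (leftUnitor Y).hom)
      = g ≫ (map (isTerminalUnit.from X) (𝟙 Y) ≫ (leftUnitor Y).hom) →
    f = g

namespace ProdStruct

variable {C : Type u} [Category.{v} C]

/-- The first standard projection `π₁ : X ⊗ Y ⟶ X`. -/
def p1 (P : ProdStruct C) (X Y : C) : P.obj X Y ⟶ X :=
  P.map (𝟙 X) (P.isTerminalUnit.from Y) ≫ (P.rightUnitor X).hom

/-- The second standard projection `π₂ : X ⊗ Y ⟶ Y`. -/
def p2 (P : ProdStruct C) (X Y : C) : P.obj X Y ⟶ Y :=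
  P.map (P.isTerminalUnit.from X) (𝟙 Y) ≫ (P.leftUnitor Y).hom

end ProdStruct

section Fam

variable {C : Type u} [Category.{v} C]

/-- Naturality of a family `i_{X,Y} : X ⊕ Y ⟶ X ⊗ Y` in both variables,
i.e. the family is a natural transformation `i : ⊕ → ⊗`. -/
def NatFam (S : SumStruct C) (P : ProdStruct C)
    (t : ∀ X Y : C, S.obj X Y ⟶ P.obj X Y) : Prop :=
  ∀ {X₁ X₂ Y₁ Y₂ : C} (f : X₁ ⟶ Y₁) (g : X₂ ⟶ Y₂),
    S.map f g ≫ t Y₁ Y₂ = t X₁ X₂ ≫ P.map f g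

/-- The unique morphism `j : 0 ⟶ 1` from the initial object to the terminal object. -/
def jMor (S : SumStruct C) (P : ProdStruct C) : S.unit ⟶ P.unit :=
  P.isTerminalUnit.from S.unit

/-- The canonical point morphism `1 ⟶ 0`, namely the composite
`λ_⊗ ∘ i_{1,0} ∘ ρ_⊕⁻¹ : 1 ⟶ 1 ⊕ 0 ⟶ 1 ⊗ 0 ⟶ 0`. -/
def ptMor (S : SumStruct C) (P : ProdStruct C)
    (t : ∀ X Y : C, S.obj X Y ⟶ P.obj X Y) : P.unit ⟶ S.unit :=
  (S.rightUnitor P.unit).inv ≫ t P.unit S.unit ≫ (P.leftUnitor S.unit).hom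

/-- The zero morphism `z_{X,Y} : X ⟶ Y`, factoring through the (zero) object `0 ≅ 1`
via the canonical point morphism `1 ⟶ 0`. -/
def zMor (S : SumStruct C) (P : ProdStruct C)
    (t : ∀ X Y : C, S.obj X Y ⟶ P.obj X Y) (X Y : C) : X ⟶ Y :=
  P.isTerminalUnit.from X ≫ ptMor S P t ≫ S.isInitialUnit.to Y

/-- `i` is compatible with `ρ`: `ρ_⊗ ∘ (1_A ⊗ j) ∘ i_{A,0} = ρ_⊕ : A ⊕ 0 ⟶ A` for all `A`. -/
def CompatRho (S : SumStruct C) (P : ProdStruct C)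
    (t : ∀ X Y : C, S.obj X Y ⟶ P.obj X Y) : Prop :=
  ∀ A : C, t A S.unit ≫ P.map (𝟙 A) (jMor S P) ≫ (P.rightUnitor A).hom = (S.rightUnitor A).hom

/-- `i` is compatible with `λ`: `λ_⊗ ∘ (j ⊗ 1_B) ∘ i_{0,B} = λ_⊕ : 0 ⊕ B ⟶ B` for all `B`. -/
def CompatLambda (S : SumStruct C) (P : ProdStruct C)
    (t : ∀ X Y : C, S.obj X Y ⟶ P.obj X Y) : Prop :=
  ∀ B : C, t S.unit B ≫ P.map (jMor S P) (𝟙 B) ≫ (P.leftUnitor B).hom = (S.leftUnitor B).hom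

end Fam

/-- If a category carries a monoidal sum structure and a monoidal product
structure and there is a natural transformation `i : ⊕ → ⊗`, then the category is pointed:
the composite `λ_⊗ ∘ i_{1,0} ∘ ρ_⊕⁻¹ : 1 ⟶ 0` (which is `ptMor S P t`) makes `0 ≅ 1`
a zero object. -/
theorem sum_prod_natTrans_pointed {C : Type u} [Category.{v} C]
    (S : SumStruct C) (P : ProdStruct C)
    (t : ∀ X Y : C, S.obj X Y ⟶ P.obj X Y) (ht : NatFam S P t) :
    IsZero S.unit ∧ IsZero P.unit := by
  set p : P.unit ⟶ S.unit := ptMor S P t with hp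
  have hpi : S.isInitialUnit.to P.unit ≫ p = 𝟙 S.unit :=
    S.isInitialUnit.hom_ext _ _
  have hip : p ≫ S.isInitialUnit.to P.unit = 𝟙 P.unit :=
    P.isTerminalUnit.hom_ext _ _
  have hS : IsZero S.unit := by
    constructor
    · intro Y
      exact ⟨⟨⟨S.isInitialUnit.to Y⟩, fun f => S.isInitialUnit.hom_ext f _⟩⟩
    · intro Y
      refine ⟨⟨⟨P.isTerminalUnit.from Y ≫ p⟩, fun f => ?_⟩⟩
      have : f = f ≫ S.isInitialUnit.to P.unit ≫ p := by rw [hpi, Category.comp_id]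
      rw [this, ← Category.assoc, P.isTerminalUnit.hom_ext (f ≫ S.isInitialUnit.to P.unit)
        (P.isTerminalUnit.from Y)]
      rfl
  have e : S.unit ≅ P.unit :=
    ⟨S.isInitialUnit.to P.unit, p, hpi, hip⟩
  exact ⟨hS, hS.of_iso e.symm⟩
end

section
/- Let C be a category equipped with a monoidal sum structure ⊕ and a monoidal product structure ⊗, and let i : ⊕ → ⊗ be a natural transformation (so C is pointed, and j : 0 → 1 denotes the unique morphism from the initial to the terminal object). If for all objects A we have π₁ ∘ i_{A,0} ∘ ι₁ = 1_A, then i is compatible with ρ, i.e., ρ_⊗ ∘ (1_A ⊗ j) ∘ i_{A,0} = ρ_⊕ : A ⊕ 0 → A for every object A. -/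
open CategoryTheory CategoryTheory.Limits

universe v u

/-- If `π₁ ∘ i_{A,0} ∘ ι₁ = 1_A` for all `A`, then the natural
transformation `i : ⊕ → ⊗` is compatible with `ρ`. -/
theorem compatRho_of_entry {C : Type u} [Category.{v} C]
    (S : SumStruct C) (P : ProdStruct C)
    (t : ∀ X Y : C, S.obj X Y ⟶ P.obj X Y) (ht : NatFam S P t)
    (h : ∀ A : C, S.i1 A S.unit ≫ t A S.unit ≫ P.p1 A S.unit = 𝟙 A) :
    CompatRho S P t := by
  intro A
  have key : t A S.unit ≫ P.p1 A S.unit = (S.rightUnitor A).hom := by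
    apply S.jointlyEpi
    · have h1 : S.isInitialUnit.to S.unit = 𝟙 S.unit := S.isInitialUnit.hom_ext _ _
      have h2 := h A
      simp only [SumStruct.i1, Category.assoc] at h2 ⊢
      rw [h2, h1, S.map_id]
      simp
    · exact S.isInitialUnit.hom_ext _ _
  simpa [ProdStruct.p1, jMor, Category.assoc] using key
end

section
/- Let C be a category equipped with a monoidal sum structure ⊕ and a monoidal product structure ⊗, and let i : ⊕ → ⊗ be a natural transformation (so C is pointed, with j : 0 → 1 the unique morphism). If for all objects B we have π₂ ∘ i_{0,B} ∘ ι₂ = 1_B, then i is compatible with λ, i.e., λ_⊗ ∘ (j ⊗ 1_B) ∘ i_{0,B} = λ_⊕ : 0 ⊕ B → B for every object B. -/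
open CategoryTheory CategoryTheory.Limits

universe v u

/-- If `π₂ ∘ i_{0,B} ∘ ι₂ = 1_B` for all `B`, then the natural
transformation `i : ⊕ → ⊗` is compatible with `λ`. -/
theorem compatLambda_of_entry {C : Type u} [Category.{v} C]
    (S : SumStruct C) (P : ProdStruct C)
    (t : ∀ X Y : C, S.obj X Y ⟶ P.obj X Y) (ht : NatFam S P t)
    (h : ∀ B : C, S.i2 S.unit B ≫ t S.unit B ≫ P.p2 S.unit B = 𝟙 B) :
    CompatLambda S P t := by
  intro B
  apply S.jointlyEpi
  · exact S.isInitialUnit.hom_ext _ _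
  · have h2 := h B
    have hj : P.isTerminalUnit.from S.unit = jMor S P := rfl
    have hlam : S.i2 S.unit B ≫ (S.leftUnitor B).hom = 𝟙 B := by
      simp [SumStruct.i2, S.isInitialUnit.hom_ext (S.isInitialUnit.to S.unit) (𝟙 S.unit),
        S.map_id]
    calc (S.i2 S.unit B) ≫ t S.unit B ≫ P.map (jMor S P) (𝟙 B) ≫ (P.leftUnitor B).hom
        = S.i2 S.unit B ≫ t S.unit B ≫ P.p2 S.unit B := by
          simp [ProdStruct.p2, hj]
      _ = 𝟙 B := h2
      _ = S.i2 S.unit B ≫ (S.leftUnitor B).hom := hlam.symm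
end

section
/- Let C be a category equipped with a monoidal sum structure ⊕ and a monoidal product structure ⊗. A family of morphisms (i_{A,B} : A ⊕ B → A ⊗ B), indexed by pairs of objects (A, B), constitutes the components of a transformer i : ⊕ → ⊗ (a natural transformation compatible with both ρ and λ) if and only if the matrix presentation of each i_{A,B} is the identity matrix, i.e., π₁ ∘ i_{A,B} ∘ ι₁ = 1_A, π₂ ∘ i_{A,B} ∘ ι₂ = 1_B, π₂ ∘ i_{A,B} ∘ ι₁ = z_{A,B}, and π₁ ∘ i_{A,B} ∘ ι₂ = z_{B,A}, where z denotes the zero morphism. -/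
open CategoryTheory CategoryTheory.Limits

universe v u

section Aux

variable {C : Type u} [Category.{v} C] (S : SumStruct C) (P : ProdStruct C)

/-- Any two morphisms `1 ⟶ 0` are equal (they are mutually inverse to `j`). -/
lemma unit_hom_unique (h h' : P.unit ⟶ S.unit) : h = h' := by
  have h1 : h ≫ P.isTerminalUnit.from S.unit = 𝟙 P.unit := P.isTerminalUnit.hom_ext _ _
  have h2 : P.isTerminalUnit.from S.unit ≫ h' = 𝟙 S.unit := S.isInitialUnit.hom_ext _ _
  calc h = h ≫ (P.isTerminalUnit.from S.unit ≫ h') := by rw [h2, Category.comp_id]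
    _ = (h ≫ P.isTerminalUnit.from S.unit) ≫ h' := by rw [Category.assoc]
    _ = h' := by rw [h1, Category.id_comp]

lemma sum_rho_inv {X Y : C} (f : X ⟶ Y) :
    (S.rightUnitor X).inv ≫ S.map f (𝟙 S.unit) = f ≫ (S.rightUnitor Y).inv := by
  rw [Iso.inv_comp_eq, ← Category.assoc, ← S.rightUnitor_naturality f, Category.assoc,
    Iso.hom_inv_id, Category.comp_id]

lemma sum_lambda_inv {X Y : C} (f : X ⟶ Y) :
    (S.leftUnitor X).inv ≫ S.map (𝟙 S.unit) f = f ≫ (S.leftUnitor Y).inv := by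
  rw [Iso.inv_comp_eq, ← Category.assoc, ← S.leftUnitor_naturality f, Category.assoc,
    Iso.hom_inv_id, Category.comp_id]

lemma i1_nat {X₁ X₂ Y₁ Y₂ : C} (f : X₁ ⟶ Y₁) (g : X₂ ⟶ Y₂) :
    S.i1 X₁ X₂ ≫ S.map f g = f ≫ S.i1 Y₁ Y₂ := by
  calc S.i1 X₁ X₂ ≫ S.map f g
      = (S.rightUnitor X₁).inv ≫ S.map (𝟙 X₁ ≫ f) (S.isInitialUnit.to X₂ ≫ g) := by
        rw [SumStruct.i1, Category.assoc, ← S.map_comp]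
    _ = (S.rightUnitor X₁).inv ≫ S.map (f ≫ 𝟙 Y₁) (𝟙 S.unit ≫ S.isInitialUnit.to Y₂) := by
        rw [Category.id_comp, Category.comp_id, Category.id_comp,
          S.isInitialUnit.hom_ext (S.isInitialUnit.to X₂ ≫ g) (S.isInitialUnit.to Y₂)]
    _ = ((S.rightUnitor X₁).inv ≫ S.map f (𝟙 S.unit)) ≫ S.map (𝟙 Y₁) (S.isInitialUnit.to Y₂) := by
        rw [S.map_comp, Category.assoc]
    _ = f ≫ S.i1 Y₁ Y₂ := by rw [sum_rho_inv, SumStruct.i1, Category.assoc]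

lemma i2_nat {X₁ X₂ Y₁ Y₂ : C} (f : X₁ ⟶ Y₁) (g : X₂ ⟶ Y₂) :
    S.i2 X₁ X₂ ≫ S.map f g = g ≫ S.i2 Y₁ Y₂ := by
  calc S.i2 X₁ X₂ ≫ S.map f g
      = (S.leftUnitor X₂).inv ≫ S.map (S.isInitialUnit.to X₁ ≫ f) (𝟙 X₂ ≫ g) := by
        rw [SumStruct.i2, Category.assoc, ← S.map_comp]
    _ = (S.leftUnitor X₂).inv ≫ S.map (𝟙 S.unit ≫ S.isInitialUnit.to Y₁) (g ≫ 𝟙 Y₂) := by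
        rw [Category.id_comp, Category.comp_id, Category.id_comp,
          S.isInitialUnit.hom_ext (S.isInitialUnit.to X₁ ≫ f) (S.isInitialUnit.to Y₁)]
    _ = ((S.leftUnitor X₂).inv ≫ S.map (𝟙 S.unit) g) ≫ S.map (S.isInitialUnit.to Y₁) (𝟙 Y₂) := by
        rw [S.map_comp, Category.assoc]
    _ = g ≫ S.i2 Y₁ Y₂ := by rw [sum_lambda_inv, SumStruct.i2, Category.assoc]

lemma p1_nat {X₁ X₂ Y₁ Y₂ : C} (f : X₁ ⟶ Y₁) (g : X₂ ⟶ Y₂) :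
    P.map f g ≫ P.p1 Y₁ Y₂ = P.p1 X₁ X₂ ≫ f := by
  calc P.map f g ≫ P.p1 Y₁ Y₂
      = P.map (f ≫ 𝟙 Y₁) (g ≫ P.isTerminalUnit.from Y₂) ≫ (P.rightUnitor Y₁).hom := by
        rw [ProdStruct.p1, P.map_comp, Category.assoc]
    _ = P.map (𝟙 X₁ ≫ f) (P.isTerminalUnit.from X₂ ≫ 𝟙 P.unit) ≫ (P.rightUnitor Y₁).hom := by
        rw [Category.comp_id, Category.id_comp, Category.comp_id,
          P.isTerminalUnit.hom_ext (g ≫ P.isTerminalUnit.from Y₂) (P.isTerminalUnit.from X₂)]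
    _ = P.map (𝟙 X₁) (P.isTerminalUnit.from X₂) ≫ P.map f (𝟙 P.unit) ≫ (P.rightUnitor Y₁).hom := by
        rw [P.map_comp, Category.assoc]
    _ = P.p1 X₁ X₂ ≫ f := by
        rw [P.rightUnitor_naturality, ProdStruct.p1, Category.assoc]

lemma p2_nat {X₁ X₂ Y₁ Y₂ : C} (f : X₁ ⟶ Y₁) (g : X₂ ⟶ Y₂) :
    P.map f g ≫ P.p2 Y₁ Y₂ = P.p2 X₁ X₂ ≫ g := by
  calc P.map f g ≫ P.p2 Y₁ Y₂
      = P.map (f ≫ P.isTerminalUnit.from Y₁) (g ≫ 𝟙 Y₂) ≫ (P.leftUnitor Y₂).hom := by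
        rw [ProdStruct.p2, P.map_comp, Category.assoc]
    _ = P.map (P.isTerminalUnit.from X₁ ≫ 𝟙 P.unit) (𝟙 X₂ ≫ g) ≫ (P.leftUnitor Y₂).hom := by
        rw [Category.comp_id, Category.id_comp, Category.comp_id,
          P.isTerminalUnit.hom_ext (f ≫ P.isTerminalUnit.from Y₁) (P.isTerminalUnit.from X₁)]
    _ = P.map (P.isTerminalUnit.from X₁) (𝟙 X₂) ≫ P.map (𝟙 P.unit) g ≫ (P.leftUnitor Y₂).hom := by
        rw [P.map_comp, Category.assoc]
    _ = P.p2 X₁ X₂ ≫ g := by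
        rw [P.leftUnitor_naturality, ProdStruct.p2, Category.assoc]

lemma sum_epi_ext {X Y Z : C} (f g : S.obj X Y ⟶ Z)
    (h1 : S.i1 X Y ≫ f = S.i1 X Y ≫ g) (h2 : S.i2 X Y ≫ f = S.i2 X Y ≫ g) : f = g := by
  apply S.jointlyEpi f g
  · simpa [SumStruct.i1, Category.assoc] using h1
  · simpa [SumStruct.i2, Category.assoc] using h2

lemma prod_mono_ext {X Y Z : C} (f g : Z ⟶ P.obj X Y)
    (h1 : f ≫ P.p1 X Y = g ≫ P.p1 X Y) (h2 : f ≫ P.p2 X Y = g ≫ P.p2 X Y) : f = g := by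
  apply P.jointlyMono f g
  · simpa [ProdStruct.p1, Category.assoc] using h1
  · simpa [ProdStruct.p2, Category.assoc] using h2

lemma z_nat (t : ∀ X Y : C, S.obj X Y ⟶ P.obj X Y) {X₁ X₂ Y₁ Y₂ : C}
    (f : X₁ ⟶ Y₁) (g : X₂ ⟶ Y₂) :
    f ≫ zMor S P t Y₁ Y₂ = zMor S P t X₁ X₂ ≫ g := by
  simp only [zMor, Category.assoc]
  rw [← Category.assoc f, P.isTerminalUnit.hom_ext (f ≫ P.isTerminalUnit.from Y₁)
    (P.isTerminalUnit.from X₁),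
    S.isInitialUnit.hom_ext (S.isInitialUnit.to X₂ ≫ g) (S.isInitialUnit.to Y₂)]

lemma i1_unit (A : C) : S.i1 A S.unit = (S.rightUnitor A).inv := by
  rw [SumStruct.i1, S.isInitialUnit.hom_ext (S.isInitialUnit.to S.unit) (𝟙 S.unit),
    S.map_id, Category.comp_id]

lemma i2_unit (B : C) : S.i2 S.unit B = (S.leftUnitor B).inv := by
  rw [SumStruct.i2, S.isInitialUnit.hom_ext (S.isInitialUnit.to S.unit) (𝟙 S.unit),
    S.map_id, Category.comp_id]

end Aux

/-- A family of morphisms `i_{A,B} : A ⊕ B ⟶ A ⊗ B` is the family of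
components of a transformer `i : ⊕ → ⊗` (a natural transformation compatible with both
`ρ` and `λ`) if and only if the matrix presentation of each `i_{A,B}` is the identity
matrix (diagonal entries identities, off-diagonal entries zero morphisms). -/
theorem transformer_iff_identity_matrix {C : Type u} [Category.{v} C]
    (S : SumStruct C) (P : ProdStruct C)
    (t : ∀ X Y : C, S.obj X Y ⟶ P.obj X Y) :
    (NatFam S P t ∧ CompatRho S P t ∧ CompatLambda S P t) ↔
      (∀ A B : C,
        S.i1 A B ≫ t A B ≫ P.p1 A B = 𝟙 A ∧
        S.i2 A B ≫ t A B ≫ P.p2 A B = 𝟙 B ∧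
        S.i1 A B ≫ t A B ≫ P.p2 A B = zMor S P t A B ∧
        S.i2 A B ≫ t A B ≫ P.p1 A B = zMor S P t B A) := by
  constructor
  · rintro ⟨hn, hr, hl⟩ A B
    refine ⟨?_, ?_, ?_, ?_⟩
    · calc S.i1 A B ≫ t A B ≫ P.p1 A B
          = (S.rightUnitor A).inv ≫ (S.map (𝟙 A) (S.isInitialUnit.to B) ≫ t A B) ≫
              P.map (𝟙 A) (P.isTerminalUnit.from B) ≫ (P.rightUnitor A).hom := by
            simp only [SumStruct.i1, ProdStruct.p1, Category.assoc]
        _ = (S.rightUnitor A).inv ≫ t A S.unit ≫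
              (P.map (𝟙 A) (S.isInitialUnit.to B) ≫ P.map (𝟙 A) (P.isTerminalUnit.from B)) ≫
              (P.rightUnitor A).hom := by
            rw [hn (𝟙 A) (S.isInitialUnit.to B)]; simp only [Category.assoc]
        _ = (S.rightUnitor A).inv ≫ t A S.unit ≫ P.map (𝟙 A) (jMor S P) ≫
              (P.rightUnitor A).hom := by
            rw [← P.map_comp, Category.comp_id,
              P.isTerminalUnit.hom_ext (S.isInitialUnit.to B ≫ P.isTerminalUnit.from B)
                (jMor S P)]
        _ = 𝟙 A := by rw [hr A, Iso.inv_hom_id]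
    · calc S.i2 A B ≫ t A B ≫ P.p2 A B
          = (S.leftUnitor B).inv ≫ (S.map (S.isInitialUnit.to A) (𝟙 B) ≫ t A B) ≫
              P.map (P.isTerminalUnit.from A) (𝟙 B) ≫ (P.leftUnitor B).hom := by
            simp only [SumStruct.i2, ProdStruct.p2, Category.assoc]
        _ = (S.leftUnitor B).inv ≫ t S.unit B ≫
              (P.map (S.isInitialUnit.to A) (𝟙 B) ≫ P.map (P.isTerminalUnit.from A) (𝟙 B)) ≫
              (P.leftUnitor B).hom := by
            rw [hn (S.isInitialUnit.to A) (𝟙 B)]; simp only [Category.assoc]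
        _ = (S.leftUnitor B).inv ≫ t S.unit B ≫ P.map (jMor S P) (𝟙 B) ≫
              (P.leftUnitor B).hom := by
            rw [← P.map_comp, Category.comp_id,
              P.isTerminalUnit.hom_ext (S.isInitialUnit.to A ≫ P.isTerminalUnit.from A)
                (jMor S P)]
        _ = 𝟙 B := by rw [hl B, Iso.inv_hom_id]
    · calc S.i1 A B ≫ t A B ≫ P.p2 A B
          = (S.rightUnitor A).inv ≫ S.map (𝟙 A) (S.isInitialUnit.to B) ≫
              (t A B ≫ P.map (P.isTerminalUnit.from A) (𝟙 B)) ≫ (P.leftUnitor B).hom := by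
            simp only [SumStruct.i1, ProdStruct.p2, Category.assoc]
        _ = (S.rightUnitor A).inv ≫
              (S.map (𝟙 A) (S.isInitialUnit.to B) ≫ S.map (P.isTerminalUnit.from A) (𝟙 B)) ≫
              t P.unit B ≫ (P.leftUnitor B).hom := by
            rw [← hn (P.isTerminalUnit.from A) (𝟙 B)]; simp only [Category.assoc]
        _ = ((S.rightUnitor A).inv ≫ S.map (P.isTerminalUnit.from A) (𝟙 S.unit)) ≫
              (S.map (𝟙 P.unit) (S.isInitialUnit.to B) ≫ t P.unit B) ≫
              (P.leftUnitor B).hom := by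
            rw [← S.map_comp]
            simp only [Category.id_comp, Category.comp_id]
            rw [show S.map (P.isTerminalUnit.from A) (S.isInitialUnit.to B)
                = S.map (P.isTerminalUnit.from A) (𝟙 S.unit) ≫
                  S.map (𝟙 P.unit) (S.isInitialUnit.to B) from by
              rw [← S.map_comp, Category.comp_id, Category.id_comp]]
            simp only [Category.assoc]
        _ = (P.isTerminalUnit.from A ≫ (S.rightUnitor P.unit).inv) ≫
              (t P.unit S.unit ≫ P.map (𝟙 P.unit) (S.isInitialUnit.to B)) ≫
              (P.leftUnitor B).hom := by
            rw [sum_rho_inv, hn (𝟙 P.unit) (S.isInitialUnit.to B)]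
        _ = P.isTerminalUnit.from A ≫ (S.rightUnitor P.unit).inv ≫ t P.unit S.unit ≫
              (P.leftUnitor S.unit).hom ≫ S.isInitialUnit.to B := by
            simp only [Category.assoc]
            rw [P.leftUnitor_naturality (S.isInitialUnit.to B)]
        _ = zMor S P t A B := by simp only [zMor, ptMor, Category.assoc]
    · calc S.i2 A B ≫ t A B ≫ P.p1 A B
          = (S.leftUnitor B).inv ≫ S.map (S.isInitialUnit.to A) (𝟙 B) ≫
              (t A B ≫ P.map (𝟙 A) (P.isTerminalUnit.from B)) ≫ (P.rightUnitor A).hom := by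
            simp only [SumStruct.i2, ProdStruct.p1, Category.assoc]
        _ = (S.leftUnitor B).inv ≫
              (S.map (S.isInitialUnit.to A) (𝟙 B) ≫ S.map (𝟙 A) (P.isTerminalUnit.from B)) ≫
              t A P.unit ≫ (P.rightUnitor A).hom := by
            rw [← hn (𝟙 A) (P.isTerminalUnit.from B)]; simp only [Category.assoc]
        _ = ((S.leftUnitor B).inv ≫ S.map (𝟙 S.unit) (P.isTerminalUnit.from B)) ≫
              (S.map (S.isInitialUnit.to A) (𝟙 P.unit) ≫ t A P.unit) ≫
              (P.rightUnitor A).hom := by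
            rw [← S.map_comp]
            simp only [Category.id_comp, Category.comp_id]
            rw [show S.map (S.isInitialUnit.to A) (P.isTerminalUnit.from B)
                = S.map (𝟙 S.unit) (P.isTerminalUnit.from B) ≫
                  S.map (S.isInitialUnit.to A) (𝟙 P.unit) from by
              rw [← S.map_comp, Category.comp_id, Category.id_comp]]
            simp only [Category.assoc]
        _ = (P.isTerminalUnit.from B ≫ (S.leftUnitor P.unit).inv) ≫
              (t S.unit P.unit ≫ P.map (S.isInitialUnit.to A) (𝟙 P.unit)) ≫
              (P.rightUnitor A).hom := by
            rw [sum_lambda_inv, hn (S.isInitialUnit.to A) (𝟙 P.unit)]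
        _ = P.isTerminalUnit.from B ≫ ((S.leftUnitor P.unit).inv ≫ t S.unit P.unit ≫
              (P.rightUnitor S.unit).hom) ≫ S.isInitialUnit.to A := by
            simp only [Category.assoc]
            rw [P.rightUnitor_naturality (S.isInitialUnit.to A)]
        _ = P.isTerminalUnit.from B ≫ ptMor S P t ≫ S.isInitialUnit.to A := by
            rw [unit_hom_unique S P ((S.leftUnitor P.unit).inv ≫ t S.unit P.unit ≫
              (P.rightUnitor S.unit).hom) (ptMor S P t)]
        _ = zMor S P t B A := rfl
  · intro hm
    refine ⟨?_, ?_, ?_⟩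
    · intro X₁ X₂ Y₁ Y₂ f g
      apply sum_epi_ext S
      · apply prod_mono_ext P
        · simp only [Category.assoc]
          rw [reassoc_of% i1_nat S f g, p1_nat P f g, (hm Y₁ Y₂).1,
            reassoc_of% (hm X₁ X₂).1]
          simp
        · simp only [Category.assoc]
          rw [reassoc_of% i1_nat S f g, p2_nat P f g, (hm Y₁ Y₂).2.2.1,
            reassoc_of% (hm X₁ X₂).2.2.1]
          exact z_nat S P t f g
      · apply prod_mono_ext P
        · simp only [Category.assoc]
          rw [reassoc_of% i2_nat S f g, p1_nat P f g, (hm Y₁ Y₂).2.2.2,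
            reassoc_of% (hm X₁ X₂).2.2.2]
          exact z_nat S P t g f
        · simp only [Category.assoc]
          rw [reassoc_of% i2_nat S f g, p2_nat P f g, (hm Y₁ Y₂).2.1,
            reassoc_of% (hm X₁ X₂).2.1]
          simp
    · intro A
      apply sum_epi_ext S
      · calc S.i1 A S.unit ≫ t A S.unit ≫ P.map (𝟙 A) (jMor S P) ≫ (P.rightUnitor A).hom
            = S.i1 A S.unit ≫ t A S.unit ≫ P.p1 A S.unit := rfl
          _ = 𝟙 A := (hm A S.unit).1
          _ = S.i1 A S.unit ≫ (S.rightUnitor A).hom := by rw [i1_unit, Iso.inv_hom_id]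
      · exact S.isInitialUnit.hom_ext _ _
    · intro B
      apply sum_epi_ext S
      · exact S.isInitialUnit.hom_ext _ _
      · calc S.i2 S.unit B ≫ t S.unit B ≫ P.map (jMor S P) (𝟙 B) ≫ (P.leftUnitor B).hom
            = S.i2 S.unit B ≫ t S.unit B ≫ P.p2 S.unit B := rfl
          _ = 𝟙 B := (hm S.unit B).2.1
          _ = S.i2 S.unit B ≫ (S.leftUnitor B).hom := by rw [i2_unit, Iso.inv_hom_id]
end

section
/- Let C be a partially linear category (a prelinear category whose prelineariser i is an isomorphism), and let f, g : X → Y be central morphisms with associated matrix morphisms m_f, m_g : X ⊕ Y → X ⊗ Y having presentations [[1, f],[z, 1]] and [[1, g],[z, 1]] respectively. Then the composite m_g ∘ i_{X,Y}⁻¹ ∘ m_f : X ⊕ Y → X ⊗ Y has matrix presentation [[1, h],[z, 1]] for a unique morphism h : X → Y; in particular, h is central. -/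
open CategoryTheory CategoryTheory.Limits

universe v u

/-- A prelinear category: a category with a monoidal sum structure `⊕`, a monoidal
product structure `⊗`, and a prelineariser, i.e. a natural transformation
`i : ⊕ → ⊗` each of whose components has identity matrix presentation. -/
structure Prelinear (C : Type u) [Category.{v} C] where
  S : SumStruct C
  P : ProdStruct C
  t : ∀ X Y : C, S.obj X Y ⟶ P.obj X Y
  natural : ∀ {X₁ X₂ Y₁ Y₂ : C} (f : X₁ ⟶ Y₁) (g : X₂ ⟶ Y₂),
    S.map f g ≫ t Y₁ Y₂ = t X₁ X₂ ≫ P.map f g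
  mat11 : ∀ X Y : C, S.i1 X Y ≫ t X Y ≫ P.p1 X Y = 𝟙 X
  mat22 : ∀ X Y : C, S.i2 X Y ≫ t X Y ≫ P.p2 X Y = 𝟙 Y
  mat21 : ∀ X Y : C, S.i1 X Y ≫ t X Y ≫ P.p2 X Y = zMor S P t X Y
  mat12 : ∀ X Y : C, S.i2 X Y ≫ t X Y ≫ P.p1 X Y = zMor S P t Y X

namespace Prelinear

variable {C : Type u} [Category.{v} C]

/-- The zero morphism `z_{X,Y} : X ⟶ Y` of a prelinear category. -/
def z (L : Prelinear C) (X Y : C) : X ⟶ Y := zMor L.S L.P L.t X Y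

/-- A morphism `f : X ⟶ Y` is central if `f ⊏_⊕ 1_Y` and `f ⊏_⊗ 1_X`, i.e. there is
`φ : X ⊕ Y ⟶ Y` with `φ ∘ ι₁ = f`, `φ ∘ ι₂ = 1_Y`, and `ψ : X ⟶ X ⊗ Y` with
`π₁ ∘ ψ = 1_X`, `π₂ ∘ ψ = f`. -/
def Central (L : Prelinear C) {X Y : C} (f : X ⟶ Y) : Prop :=
  (∃ φ : L.S.obj X Y ⟶ Y, L.S.i1 X Y ≫ φ = f ∧ L.S.i2 X Y ≫ φ = 𝟙 Y) ∧
  (∃ ψ : X ⟶ L.P.obj X Y, ψ ≫ L.P.p1 X Y = 𝟙 X ∧ ψ ≫ L.P.p2 X Y = f)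

/-- `m : X ⊕ Y ⟶ X ⊗ Y` has the matrix presentation `[[1_X, f],[z, 1_Y]]` associated to a
(central) morphism `f : X ⟶ Y`: the diagonal entries are identities, the entry
glueing `ι₁` with `π₂` is `f`, and the remaining entry is the zero morphism. -/
def MatPres (L : Prelinear C) {X Y : C} (f : X ⟶ Y)
    (m : L.S.obj X Y ⟶ L.P.obj X Y) : Prop :=
  L.S.i1 X Y ≫ m ≫ L.P.p1 X Y = 𝟙 X ∧
  L.S.i1 X Y ≫ m ≫ L.P.p2 X Y = f ∧
  L.S.i2 X Y ≫ m ≫ L.P.p1 X Y = L.z Y X ∧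
  L.S.i2 X Y ≫ m ≫ L.P.p2 X Y = 𝟙 Y

end Prelinear

/-- A partially linear category: a prelinear category whose prelineariser is a
(natural) isomorphism. -/
structure PartLinear (C : Type u) [Category.{v} C] extends Prelinear C where
  tInv : ∀ X Y : C, P.obj X Y ⟶ S.obj X Y
  t_tInv : ∀ X Y : C, t X Y ≫ tInv X Y = 𝟙 (S.obj X Y)
  tInv_t : ∀ X Y : C, tInv X Y ≫ t X Y = 𝟙 (P.obj X Y)

namespace PartLinear

variable {C : Type u} [Category.{v} C]

/-- `h` is the sum `f + g` of central morphisms `f, g : X ⟶ Y`: for the (unique) matrix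
morphisms `m_f`, `m_g` of `f` and `g`, the composite `m_g ∘ i⁻¹ ∘ m_f` has matrix
presentation `[[1, h],[z, 1]]`. -/
def IsSum (L : PartLinear C) {X Y : C} (f g h : X ⟶ Y) : Prop :=
  ∃ mf mg : L.S.obj X Y ⟶ L.P.obj X Y,
    L.toPrelinear.MatPres f mf ∧ L.toPrelinear.MatPres g mg ∧
    L.toPrelinear.MatPres h (mf ≫ L.tInv X Y ≫ mg)

end PartLinear

/-- In a partially linear category, for central `f, g : X ⟶ Y` with
matrix morphisms `m_f, m_g`, the composite `m_g ∘ i_{X,Y}⁻¹ ∘ m_f` has matrix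
presentation `[[1, h],[z, 1]]` for a unique morphism `h : X ⟶ Y`; moreover any such `h`
is central. -/
theorem comp_matrix_sum {C : Type u} [Category.{v} C] (L : PartLinear C)
    {X Y : C} (f g : X ⟶ Y)
    (hf : L.toPrelinear.Central f) (hg : L.toPrelinear.Central g)
    (mf mg : L.S.obj X Y ⟶ L.P.obj X Y)
    (hmf : L.toPrelinear.MatPres f mf) (hmg : L.toPrelinear.MatPres g mg) :
    (∃! h : X ⟶ Y, L.toPrelinear.MatPres h (mf ≫ L.tInv X Y ≫ mg)) ∧
    (∀ h : X ⟶ Y, L.toPrelinear.MatPres h (mf ≫ L.tInv X Y ≫ mg) →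
      L.toPrelinear.Central h) := by
  obtain ⟨f11, f12, f21, f22⟩ := hmf
  obtain ⟨g11, g12, g21, g22⟩ := hmg
  have je : ∀ {Z : C} (a b : L.S.obj X Y ⟶ Z),
      L.S.i1 X Y ≫ a = L.S.i1 X Y ≫ b → L.S.i2 X Y ≫ a = L.S.i2 X Y ≫ b → a = b := by
    intro Z a b h1 h2
    apply L.S.jointlyEpi
    · simpa [SumStruct.i1, Category.assoc] using h1
    · simpa [SumStruct.i2, Category.assoc] using h2
  have jm : ∀ {Z : C} (a b : Z ⟶ L.P.obj X Y),
      a ≫ L.P.p1 X Y = b ≫ L.P.p1 X Y → a ≫ L.P.p2 X Y = b ≫ L.P.p2 X Y → a = b := by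
    intro Z a b h1 h2
    apply L.P.jointlyMono
    · simpa [ProdStruct.p1, Category.assoc] using h1
    · simpa [ProdStruct.p2, Category.assoc] using h2
  -- key 1 : mg ≫ p1 = t ≫ p1
  have key1 : mg ≫ L.P.p1 X Y = L.t X Y ≫ L.P.p1 X Y := by
    apply je
    · rw [g11, L.mat11]
    · rw [g21, L.mat12]; rfl
  -- key 2 : i2 ≫ mf = i2 ≫ t
  have key2 : L.S.i2 X Y ≫ mf = L.S.i2 X Y ≫ L.t X Y := by
    apply jm
    · rw [Category.assoc, Category.assoc, f21, L.mat12]; rfl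
    · rw [Category.assoc, Category.assoc, f22, L.mat22]
  set m : L.S.obj X Y ⟶ L.P.obj X Y := mf ≫ L.tInv X Y ≫ mg with hm
  set h : X ⟶ Y := L.S.i1 X Y ≫ m ≫ L.P.p2 X Y with hh
  have e1 : L.S.i1 X Y ≫ m ≫ L.P.p1 X Y = 𝟙 X := by
    rw [hm]; simp only [Category.assoc]
    rw [key1, ← Category.assoc (L.tInv X Y), L.tInv_t, Category.id_comp, f11]
  have e3 : L.S.i2 X Y ≫ m ≫ L.P.p1 X Y = L.toPrelinear.z Y X := by
    rw [hm]; simp only [Category.assoc]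
    rw [key1, ← Category.assoc (L.tInv X Y), L.tInv_t, Category.id_comp, f21]
  have e4 : L.S.i2 X Y ≫ m ≫ L.P.p2 X Y = 𝟙 Y := by
    rw [hm, ← Category.assoc, ← Category.assoc, ← Category.assoc, key2,
      Category.assoc (L.S.i2 X Y), L.t_tInv, Category.comp_id,
      Category.assoc, g22]
  have hpres : L.toPrelinear.MatPres h m := ⟨e1, rfl, e3, e4⟩
  constructor
  · refine ⟨h, hpres, ?_⟩
    intro h' hp'
    rw [hh, ← hp'.2.1]
  · intro h' hp'
    constructor
    · exact ⟨m ≫ L.P.p2 X Y, hp'.2.1, hp'.2.2.2⟩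
    · refine ⟨L.S.i1 X Y ≫ m, ?_, ?_⟩
      · rw [Category.assoc]; exact hp'.1
      · rw [Category.assoc]; exact hp'.2.1
end

section
/- Let C be a partially linear category. For central morphisms f, g : X → Y, define f + g to be the unique morphism h such that m_g ∘ i_{X,Y}⁻¹ ∘ m_f has matrix presentation [[1, h],[z, 1]], where m_f and m_g are the matrix morphisms of f and g. Then + is associative on central morphisms: for all central f, g, k : X → Y, (f + g) + k = f + (g + k). -/
open CategoryTheory CategoryTheory.Limits

universe v u

/-- A matrix presentation determines the matrix morphism uniquely. -/
lemma matPres_unique {C : Type u} [Category.{v} C] (L : Prelinear C) {X Y : C}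
    (f : X ⟶ Y) {m m' : L.S.obj X Y ⟶ L.P.obj X Y}
    (h : L.MatPres f m) (h' : L.MatPres f m') : m = m' := by
  obtain ⟨h11, h12, h21, h22⟩ := h
  obtain ⟨h11', h12', h21', h22'⟩ := h'
  apply L.S.jointlyEpi
  · apply L.P.jointlyMono
    · have := h11.trans h11'.symm
      simpa [SumStruct.i1, ProdStruct.p1, Category.assoc] using this
    · have := h12.trans h12'.symm
      simpa [SumStruct.i1, ProdStruct.p2, Category.assoc] using this
  · apply L.P.jointlyMono
    · have := h21.trans h21'.symm
      simpa [SumStruct.i2, ProdStruct.p1, Category.assoc] using this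
    · have := h22.trans h22'.symm
      simpa [SumStruct.i2, ProdStruct.p2, Category.assoc] using this

/-- A matrix presentation determines the presented morphism uniquely. -/
lemma matPres_determines {C : Type u} [Category.{v} C] (L : Prelinear C) {X Y : C}
    {f f' : X ⟶ Y} {m : L.S.obj X Y ⟶ L.P.obj X Y}
    (h : L.MatPres f m) (h' : L.MatPres f' m) : f = f' :=
  h.2.1.symm.trans h'.2.1

/-- In a partially linear category, the addition of central morphisms
(`f + g` is the unique `h` whose matrix morphism is `m_g ∘ i⁻¹ ∘ m_f`) is associative:
`(f + g) + k = f + (g + k)`. -/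
theorem add_assoc_central {C : Type u} [Category.{v} C] (L : PartLinear C)
    {X Y : C} (f g k : X ⟶ Y)
    (hf : L.toPrelinear.Central f) (hg : L.toPrelinear.Central g)
    (hk : L.toPrelinear.Central k)
    (s₁ s₂ u₁ u₂ : X ⟶ Y)
    (hs₁ : L.IsSum f g s₁) (hs₂ : L.IsSum s₁ k s₂)
    (hu₁ : L.IsSum g k u₁) (hu₂ : L.IsSum f u₁ u₂) :
    s₂ = u₂ := by
  obtain ⟨mf, mg, hmf, hmg, hms₁⟩ := hs₁
  obtain ⟨ms, mk, hms, hmk, hms₂⟩ := hs₂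
  obtain ⟨mg', mk', hmg', hmk', hmu₁⟩ := hu₁
  obtain ⟨mf', mu, hmf', hmu, hmu₂⟩ := hu₂
  have emg : mg' = mg := matPres_unique _ g hmg' hmg
  have emk : mk' = mk := matPres_unique _ k hmk' hmk
  have emf : mf' = mf := matPres_unique _ f hmf' hmf
  have ems : ms = mf ≫ L.tInv X Y ≫ mg := matPres_unique _ s₁ hms hms₁
  have emu : mu = mg ≫ L.tInv X Y ≫ mk := by
    apply matPres_unique _ u₁ hmu
    rw [← emg, ← emk]; exact hmu₁
  have h₂ : L.toPrelinear.MatPres s₂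
      (mf ≫ L.tInv X Y ≫ mg ≫ L.tInv X Y ≫ mk) := by
    have := hms₂
    rw [ems] at this
    simpa [Category.assoc] using this
  have h₂' : L.toPrelinear.MatPres u₂
      (mf ≫ L.tInv X Y ≫ mg ≫ L.tInv X Y ≫ mk) := by
    have := hmu₂
    rw [emf, emu] at this
    simpa [Category.assoc] using this
  exact matPres_determines _ h₂ h₂'
end
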